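/- Let X be an n × p real matrix and A = XᵀX/n. Let I and J be disjoint subsets of {1,…,p}. Then ‖A_{I,J}‖₂ ≤ √((ρ₊(I) − ρ₋(I ∪ J))(ρ₊(J) − ρ₋(I ∪ J))), where A_{I,J} is the submatrix of A with rows indexed by I and columns indexed by J, and ‖A_{I,J}‖₂ = sup{|uᵀ A_{I,J} v| : ‖u‖₂ = ‖v‖₂ = 1} is the matrix operator 2-norm. -/

import Mathlib

open Matrix MeasureTheory ProbabilityTheory

noncomputable def norm2 {ι : Type*} [Fintype ι] (v : ι → ℝ) : ℝ :=
  Real.sqrt (∑ i, v i ^ 2)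

open scoped ComplexOrder in
/-- The positive semidefinite square root, as `Matrix.PosSemidef.sqrt` was defined in older Mathlib. -/
noncomputable def Matrix.PosSemidef.sqrt {n 𝕜 : Type*} [Fintype n] [RCLike 𝕜] [DecidableEq n]
    {A : Matrix n n 𝕜} (hA : A.PosSemidef) : Matrix n n 𝕜 :=
  hA.1.eigenvectorUnitary.1 * diagonal ((↑) ∘ (√·) ∘ hA.1.eigenvalues) *
    (star hA.1.eigenvectorUnitary : Matrix n n 𝕜)

open scoped Classical in
noncomputable def invSqrt {ι : Type*} [Fintype ι] [DecidableEq ι] (M : Matrix ι ι ℝ) :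
    Matrix ι ι ℝ :=
  if h : M.PosSemidef then h.sqrt⁻¹ else 0

def colSub {n p : ℕ} (X : Matrix (Fin n) (Fin p) ℝ) (F : Finset (Fin p)) :
    Matrix (Fin n) {i : Fin p // i ∈ F} ℝ :=
  Matrix.of fun r c => X r c.1

noncomputable def groupProj {n p : ℕ} (X : Matrix (Fin n) (Fin p) ℝ) (F : Finset (Fin p))
    (v : Fin n → ℝ) : ℝ :=
  norm2 ((invSqrt ((colSub X F)ᵀ * colSub X F)) *ᵥ ((colSub X F)ᵀ *ᵥ v))

def restr {p : ℕ} (F : Finset (Fin p)) (β : Fin p → ℝ) : Fin p → ℝ :=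
  fun i => if i ∈ F then β i else 0

/-- `G` is a partition of the index set into disjoint groups. -/
def IsPartition {p m : ℕ} (G : Fin m → Finset (Fin p)) : Prop :=
  (∀ j₁ j₂, j₁ ≠ j₂ → Disjoint (G j₁) (G j₂)) ∧ Finset.univ.biUnion G = Finset.univ

/-- `β` is `(g, k)` strongly group-sparse. -/
def SGS {p m : ℕ} (G : Fin m → Finset (Fin p)) (g k : ℕ) (β : Fin p → ℝ) : Prop :=
  ∃ S : Finset (Fin m), S.card ≤ g ∧ (S.biUnion G).card ≤ k ∧
    ∀ i, β i ≠ 0 → i ∈ S.biUnion G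

noncomputable def rhoMinusF {n p : ℕ} (X : Matrix (Fin n) (Fin p) ℝ) (F : Finset (Fin p)) : ℝ :=
  sInf {r : ℝ | ∃ β : Fin p → ℝ, β ≠ 0 ∧ (∀ i ∉ F, β i = 0) ∧
    r = norm2 (X *ᵥ β) ^ 2 / (n * norm2 β ^ 2)}

noncomputable def rhoPlusF {n p : ℕ} (X : Matrix (Fin n) (Fin p) ℝ) (F : Finset (Fin p)) : ℝ :=
  sSup {r : ℝ | ∃ β : Fin p → ℝ, β ≠ 0 ∧ (∀ i ∉ F, β i = 0) ∧
    r = norm2 (X *ᵥ β) ^ 2 / (n * norm2 β ^ 2)}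

noncomputable def rhoMinusN {n p m : ℕ} (X : Matrix (Fin n) (Fin p) ℝ)
    (G : Fin m → Finset (Fin p)) (s : ℕ) : ℝ :=
  sInf {r : ℝ | ∃ S : Finset (Fin m), (S.biUnion G).card ≤ s ∧ r = rhoMinusF X (S.biUnion G)}

noncomputable def rhoPlusN {n p m : ℕ} (X : Matrix (Fin n) (Fin p) ℝ)
    (G : Fin m → Finset (Fin p)) (s : ℕ) : ℝ :=
  sSup {r : ℝ | ∃ S : Finset (Fin m), (S.biUnion G).card ≤ s ∧ r = rhoPlusF X (S.biUnion G)}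

/-- The group Lasso objective. -/
noncomputable def glObj {n p m : ℕ} (X : Matrix (Fin n) (Fin p) ℝ)
    (G : Fin m → Finset (Fin p)) (lam : Fin m → ℝ) (y : Fin n → ℝ) (β : Fin p → ℝ) : ℝ :=
  (1 / (n : ℝ)) * norm2 (X *ᵥ β - y) ^ 2 + ∑ j, lam j * norm2 (restr (G j) β)

/-!
For `t : ℝ` the vector `β = t • u + v` is supported on `I ∪ J` and, since `u ⊥ v`, has
`‖β‖² = t² + 1`. Writing `g(x, y) = ⟨X x, X y⟩ / n` and `m = ρ₋(I ∪ J)`, the definition of `m`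
gives `m (t² + 1) ≤ g(β, β) = t² g(u, u) + 2 t g(u, v) + g(v, v)`. So the quadratic
`(g(u, u) - m) t² + 2 g(u, v) t + (g(v, v) - m)` is nonnegative, its discriminant is `≤ 0`, and
`g(u, v)² ≤ (g(u, u) - m)(g(v, v) - m) ≤ (ρ₊(I) - m)(ρ₊(J) - m)`.
-/

lemma sq_le_mul_of_forall_quadratic_nonneg {a b c : ℝ}
    (h : ∀ x : ℝ, 0 ≤ a * (x * x) + 2 * b * x + c) : b ^ 2 ≤ a * c := by
  have := discrim_le_zero h
  rw [discrim] at this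
  linarith

section Norm2

variable {ι : Type*} [Fintype ι]

lemma norm2_sq (v : ι → ℝ) : norm2 v ^ 2 = v ⬝ᵥ v := by
  rw [norm2, Real.sq_sqrt (by positivity)]
  simp only [dotProduct, sq]

lemma ne_zero_of_norm2_sq_ne_zero {v : ι → ℝ} (h : norm2 v ^ 2 ≠ 0) : v ≠ 0 := by
  rintro rfl
  simp [norm2_sq] at h

lemma dotProduct_eq_zero_of_disjoint {I J : Finset ι} (hIJ : Disjoint I J) {u v : ι → ℝ}
    (hu : ∀ i ∉ I, u i = 0) (hv : ∀ i ∉ J, v i = 0) : u ⬝ᵥ v = 0 :=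
  Finset.sum_eq_zero fun i _ => by
    by_cases hi : i ∈ I
    · rw [hv i (Finset.disjoint_left.mp hIJ hi), mul_zero]
    · rw [hu i hi, zero_mul]

lemma norm2_mulVec_sq_le {κ : Type*} [Fintype κ] (X : Matrix κ ι ℝ) (β : ι → ℝ) :
    norm2 (X *ᵥ β) ^ 2 ≤ (∑ i, ∑ j, X i j ^ 2) * norm2 β ^ 2 := by
  simp only [norm2, Real.sq_sqrt (Finset.sum_nonneg fun _ _ => sq_nonneg _)]
  rw [Finset.sum_mul]
  exact Finset.sum_le_sum fun i _ => Finset.sum_mul_sq_le_sq_mul_sq Finset.univ (X i) β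

end Norm2

section Rayleigh

variable {n p : ℕ} (X : Matrix (Fin n) (Fin p) ℝ)

noncomputable def gramForm (u v : Fin p → ℝ) : ℝ := (X *ᵥ u) ⬝ᵥ (X *ᵥ v) / n

lemma dotProduct_gram_mulVec (u v : Fin p → ℝ) :
    u ⬝ᵥ ((((1 : ℝ) / n) • (Xᵀ * X)) *ᵥ v) = gramForm X u v := by
  rw [gramForm, smul_mulVec, dotProduct_smul, ← mulVec_mulVec, dotProduct_mulVec,
    vecMul_transpose, smul_eq_mul]
  ring

lemma gramForm_self_of_norm2_eq_one {u : Fin p → ℝ} (hu : norm2 u = 1) :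
    norm2 (X *ᵥ u) ^ 2 / (n * norm2 u ^ 2) = gramForm X u u := by
  rw [hu, norm2_sq, gramForm]
  ring

variable {F : Finset (Fin p)} {β : Fin p → ℝ}

lemma rhoMinusF_le (hβ : β ≠ 0) (hF : ∀ i ∉ F, β i = 0) :
    rhoMinusF X F ≤ norm2 (X *ᵥ β) ^ 2 / (n * norm2 β ^ 2) :=
  csInf_le ⟨0, by rintro _ ⟨β, -, -, rfl⟩; positivity⟩ ⟨β, hβ, hF, rfl⟩

lemma le_rhoPlusF (hβ : β ≠ 0) (hF : ∀ i ∉ F, β i = 0) :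
    norm2 (X *ᵥ β) ^ 2 / (n * norm2 β ^ 2) ≤ rhoPlusF X F := by
  refine le_csSup ⟨(∑ i, ∑ j, X i j ^ 2) / n, ?_⟩ ⟨β, hβ, hF, rfl⟩
  rintro _ ⟨γ, hγ, -, rfl⟩
  have hγ2 : norm2 γ ^ 2 ≠ 0 := by
    rw [norm2_sq]
    exact fun h => hγ (dotProduct_self_eq_zero.mp h)
  calc norm2 (X *ᵥ γ) ^ 2 / (n * norm2 γ ^ 2)
      ≤ (∑ i, ∑ j, X i j ^ 2) * norm2 γ ^ 2 / (n * norm2 γ ^ 2) :=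
        div_le_div_of_nonneg_right (norm2_mulVec_sq_le X γ) (by positivity)
    _ = (∑ i, ∑ j, X i j ^ 2) / n := mul_div_mul_right _ _ hγ2

lemma rhoMinusF_mul_le_gramForm {u v : Fin p → ℝ} (hu : ∀ i ∉ F, u i = 0)
    (hv : ∀ i ∉ F, v i = 0) (hun : norm2 u = 1) (hvn : norm2 v = 1) (huv : u ⬝ᵥ v = 0)
    (x : ℝ) :
    rhoMinusF X F * (x * x + 1) ≤
      gramForm X u u * (x * x) + 2 * gramForm X u v * x + gramForm X v v := by
  have hu2 : u ⬝ᵥ u = 1 := by rw [← norm2_sq, hun, one_pow]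
  have hv2 : v ⬝ᵥ v = 1 := by rw [← norm2_sq, hvn, one_pow]
  have hβn : norm2 (x • u + v) ^ 2 = x * x + 1 := by
    simp only [norm2_sq, add_dotProduct, dotProduct_add, smul_dotProduct, dotProduct_smul,
      smul_eq_mul, dotProduct_comm v u, huv, hu2, hv2]
    ring
  have hpos : 0 < x * x + 1 := add_pos_of_nonneg_of_pos (mul_self_nonneg x) one_pos
  have hm := rhoMinusF_le X (ne_zero_of_norm2_sq_ne_zero (by linarith))
    (fun i hi => by simp [hu i hi, hv i hi] : ∀ i ∉ F, (x • u + v) i = 0)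
  rw [hβn, ← div_div, le_div_iff₀ hpos] at hm
  calc rhoMinusF X F * (x * x + 1) ≤ norm2 (X *ᵥ (x • u + v)) ^ 2 / n := hm
    _ = _ := by
      simp only [norm2_sq, gramForm, mulVec_add, mulVec_smul, add_dotProduct, dotProduct_add,
        smul_dotProduct, dotProduct_smul, smul_eq_mul, dotProduct_comm (X *ᵥ v) (X *ᵥ u)]
      ring

end Rayleigh

/-- Lemma A2: for `A = XᵀX/n` and disjoint index sets `I, J`,
`‖A_{I,J}‖₂ ≤ √((ρ₊(I) - ρ₋(I ∪ J))(ρ₊(J) - ρ₋(I ∪ J)))`, stated via all unit vectors `u`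
supported on `I` and `v` supported on `J`. -/
theorem stmt_10 (n p : ℕ) (X : Matrix (Fin n) (Fin p) ℝ)
    (I J : Finset (Fin p)) (hIJ : Disjoint I J)
    (u v : Fin p → ℝ) (hu : ∀ i ∉ I, u i = 0) (hv : ∀ i ∉ J, v i = 0)
    (hun : norm2 u = 1) (hvn : norm2 v = 1) :
    |u ⬝ᵥ ((((1 : ℝ) / n) • (Xᵀ * X)) *ᵥ v)| ≤
      Real.sqrt ((rhoPlusF X I - rhoMinusF X (I ∪ J)) *
        (rhoPlusF X J - rhoMinusF X (I ∪ J))) := by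
  have hu0 : u ≠ 0 := ne_zero_of_norm2_sq_ne_zero (by simp [hun])
  have hv0 : v ≠ 0 := ne_zero_of_norm2_sq_ne_zero (by simp [hvn])
  have huIJ : ∀ i ∉ I ∪ J, u i = 0 := fun i hi => hu i fun h => hi (Finset.mem_union_left _ h)
  have hvIJ : ∀ i ∉ I ∪ J, v i = 0 := fun i hi => hv i fun h => hi (Finset.mem_union_right _ h)
  have huI := le_rhoPlusF X hu0 hu
  have hvJ := le_rhoPlusF X hv0 hv
  have hmu := rhoMinusF_le X hu0 huIJ
  have hmv := rhoMinusF_le X hv0 hvIJ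
  rw [gramForm_self_of_norm2_eq_one X hun] at huI hmu
  rw [gramForm_self_of_norm2_eq_one X hvn] at hvJ hmv
  have hdisc : gramForm X u v ^ 2 ≤
      (gramForm X u u - rhoMinusF X (I ∪ J)) * (gramForm X v v - rhoMinusF X (I ∪ J)) :=
    sq_le_mul_of_forall_quadratic_nonneg fun x => by
      have := rhoMinusF_mul_le_gramForm X huIJ hvIJ hun hvn
        (dotProduct_eq_zero_of_disjoint hIJ hu hv) x
      linarith
  rw [dotProduct_gram_mulVec]
  refine Real.abs_le_sqrt (hdisc.trans ?_)
  exact mul_le_mul (by linarith) (by linarith) (by linarith) (by linarith)
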